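/- arXiv:1301.1104 — 3 statements merged into one kernel-verified Lean document; each statement's English description precedes it below -/
import Mathlib

section
/- Let V : ℝ³ → ℝ³ be a smooth vector field with globally defined flow T_t, let X ∈ ℝ³, and let n ∈ ℝ³ be a unit vector. Define the surface Jacobian J_s(X,t) = det(DT_t(X)) · ‖(DT_t(X))^{-T} n‖. Then the derivative of t ↦ J_s(X,t) at t = 0 equals the surface divergence of V at X relative to n: (d/dt)J_s(X,t)|_{t=0} = ∇·V(X) − ⟨n, DV(X) n⟩. -/
open Matrix

/-- The Euclidean norm on `Fin 3 → ℝ`. -/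
noncomputable def enorm3 (v : Fin 3 → ℝ) : ℝ := Real.sqrt (v ⬝ᵥ v)

open Set Filter in

lemma hasDerivAt_of_quadratic_bound {f : ℝ → ℝ} {c C : ℝ}
    (h : ∀ᶠ t in nhds (0:ℝ), |f t - f 0 - t * c| ≤ C * t ^ 2) :
    HasDerivAt f c 0 := by
  rw [hasDerivAt_iff_isLittleO]
  simp only [sub_zero, smul_eq_mul]
  rw [Asymptotics.isLittleO_iff]
  intro ε hε
  have h2 : ∀ᶠ t : ℝ in nhds 0, |t| ≤ ε / (|C| + 1) := by
    have hpos : (0:ℝ) < ε / (|C| + 1) := by positivity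
    filter_upwards [Metric.closedBall_mem_nhds (0:ℝ) hpos] with t ht
    simpa [Real.dist_eq] using ht
  filter_upwards [h, h2] with t ht1 ht2
  have habs : |C| * |t| ≤ ε := by
    calc |C| * |t| ≤ |C| * (ε / (|C| + 1)) := mul_le_mul_of_nonneg_left ht2 (abs_nonneg C)
      _ ≤ ε := by
        rw [mul_div_assoc']
        rw [div_le_iff₀ (by positivity)]
        nlinarith [abs_nonneg C, hε.le]
  calc ‖f t - f 0 - t * c‖ = |f t - f 0 - t * c| := rfl
    _ ≤ C * t ^ 2 := ht1
    _ ≤ |C| * t ^ 2 := mul_le_mul_of_nonneg_right (le_abs_self C) (sq_nonneg t)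
    _ = |C| * |t| * |t| := by rw [← sq_abs]; ring
    _ ≤ ε * |t| := mul_le_mul_of_nonneg_right habs (abs_nonneg t)
    _ = ε * ‖t‖ := by rw [Real.norm_eq_abs]


open Set Filter in
lemma key_forward
    (V : (Fin 3 → ℝ) → (Fin 3 → ℝ)) (hV : ContDiff ℝ (⊤ : ℕ∞) V)
    (T : ℝ → (Fin 3 → ℝ) → (Fin 3 → ℝ))
    (hT0 : ∀ X, T 0 X = X)
    (hTflow : ∀ t X, HasDerivAt (fun s => T s X) (V (T t X)) t)
    (DT : ℝ → (Fin 3 → ℝ) → Matrix (Fin 3) (Fin 3) ℝ)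
    (hDT : ∀ t X, HasFDerivAt (T t)
      (LinearMap.toContinuousLinearMap (Matrix.mulVecLin (DT t X))) X)
    (DV : (Fin 3 → ℝ) → Matrix (Fin 3) (Fin 3) ℝ)
    (hDV : ∀ X, HasFDerivAt V
      (LinearMap.toContinuousLinearMap (Matrix.mulVecLin (DV X))) X)
    (X : Fin 3 → ℝ) (v : Fin 3 → ℝ) :
    ∃ ε > 0, ∃ C, 0 ≤ C ∧ ∀ t ∈ Set.Icc (0:ℝ) ε,
      ‖DT t X *ᵥ v - v - t • (DV X *ᵥ v)‖ ≤ C * t ^ 2 := by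
  classical
  -- continuity of the flow in time
  have hTc : ∀ Y, Continuous (fun s => T s Y) := fun Y =>
    continuous_iff_continuousAt.2 fun s => (hTflow s Y).continuousAt
  -- sup of ‖V‖ on the ball of radius 2
  obtain ⟨M₀, hM₀⟩ := (isCompact_closedBall X 2).exists_bound_of_continuousOn
    hV.continuous.continuousOn
  set M := max M₀ 0 with hMdef
  have hM : ∀ z ∈ Metric.closedBall X 2, ‖V z‖ ≤ M := fun z hz =>
    (hM₀ z hz).trans (le_max_left _ _)
  have hM0 : (0:ℝ) ≤ M := le_max_right _ _
  -- first and second derivative bounds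
  have hVdiff : Differentiable ℝ V := hV.differentiable (by simp)
  have h1 : ContDiff ℝ 1 (fderiv ℝ V) := hV.fderiv_right (by exact WithTop.coe_le_coe.2 le_top)
  obtain ⟨L₀, hL₀⟩ := (isCompact_closedBall X 2).exists_bound_of_continuousOn
    h1.continuous.continuousOn
  set L := max L₀ 0 with hLdef
  have hL : ∀ z ∈ Metric.closedBall X 2, ‖fderiv ℝ V z‖ ≤ L := fun z hz =>
    (hL₀ z hz).trans (le_max_left _ _)
  have hL0 : (0:ℝ) ≤ L := le_max_right _ _
  have h2 : Continuous (fderiv ℝ (fderiv ℝ V)) := by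
    have := h1.fderiv_right (m := 0) le_rfl
    exact this.continuous
  obtain ⟨K₀, hK₀⟩ := (isCompact_closedBall X 2).exists_bound_of_continuousOn
    (f := fderiv ℝ (fderiv ℝ V)) h2.continuousOn
  set L₂ := max K₀ 0 with hL₂def
  have hK : ∀ z ∈ Metric.closedBall X 2, ‖fderiv ℝ (fderiv ℝ V) z‖ ≤ L₂ := fun z hz =>
    (hK₀ z hz).trans (le_max_left _ _)
  have hL₂0 : (0:ℝ) ≤ L₂ := le_max_right _ _
  -- V is L-Lipschitz on the ball of radius 2
  have lipV : ∀ a ∈ Metric.closedBall X 2, ∀ b ∈ Metric.closedBall X 2,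
      ‖V b - V a‖ ≤ L * ‖b - a‖ := by
    intro a ha b hb
    exact (convex_closedBall X 2).norm_image_sub_le_of_norm_hasFDerivWithin_le
      (fun z _ => (hVdiff z).hasFDerivAt.hasFDerivWithinAt) hL ha hb
  -- fderiv V is L₂-Lipschitz on the ball of radius 2
  have lipD : ∀ a ∈ Metric.closedBall X 2, ∀ b ∈ Metric.closedBall X 2,
      ‖fderiv ℝ V b - fderiv ℝ V a‖ ≤ L₂ * ‖b - a‖ := by
    intro a ha b hb
    exact (convex_closedBall X 2).norm_image_sub_le_of_norm_hasFDerivWithin_le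
      (fun z _ => ((h1.differentiable (by simp)) z).hasFDerivAt.hasFDerivWithinAt) hK ha hb
  -- the fixed linear map
  set Φ := LinearMap.toContinuousLinearMap (Matrix.mulVecLin (DV X)) with hΦdef
  have hΦX : fderiv ℝ V X = Φ := (hDV X).fderiv
  -- Taylor-type estimate
  have taylor : ∀ ρ : ℝ, 0 ≤ ρ → ρ ≤ 2 → ∀ a ∈ Metric.closedBall X ρ,
      ∀ b ∈ Metric.closedBall X ρ, ‖V b - V a - Φ (b - a)‖ ≤ (L₂ * ρ) * ‖b - a‖ := by
    intro ρ hρ0 hρ2 a ha b hb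
    have hsub : Metric.closedBall X ρ ⊆ Metric.closedBall X 2 :=
      Metric.closedBall_subset_closedBall hρ2
    refine Convex.norm_image_sub_le_of_norm_hasFDerivWithin_le'
      (fun z _ => (hVdiff z).hasFDerivAt.hasFDerivWithinAt) ?_
      (convex_closedBall X ρ) ha hb
    intro z hz
    rw [← hΦX]
    calc ‖fderiv ℝ V z - fderiv ℝ V X‖ ≤ L₂ * ‖z - X‖ :=
          lipD X (Metric.mem_closedBall_self (by norm_num)) z (hsub hz)
      _ ≤ L₂ * ρ := mul_le_mul_of_nonneg_left
          (by rwa [← dist_eq_norm, ← Metric.mem_closedBall]) hL₂0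
  -- small time interval
  set ε₁ : ℝ := min 1 (1 / (M + 1)) with hε₁def
  have hε₁pos : 0 < ε₁ := lt_min one_pos (by positivity)
  have hε₁le1 : ε₁ ≤ 1 := min_le_left _ _
  have hε₁M : M * ε₁ < 1 := by
    have h1' : ε₁ ≤ 1 / (M + 1) := min_le_right _ _
    have : M * ε₁ ≤ M * (1 / (M + 1)) := mul_le_mul_of_nonneg_left h1' hM0
    calc M * ε₁ ≤ M * (1 / (M + 1)) := this
      _ < 1 := by rw [mul_one_div, div_lt_one (by positivity)]; linarith
  -- the flow stays in the ball of radius 2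
  have stay : ∀ Y ∈ Metric.closedBall X 1, ∀ s ∈ Icc (0:ℝ) ε₁,
      T s Y ∈ Metric.closedBall X 2 := by
    intro Y hY
    by_contra hcon
    push_neg at hcon
    obtain ⟨s₁, hs₁, hbad⟩ := hcon
    have hdistc : Continuous fun u => dist (T u Y) X := (hTc Y).dist continuous_const
    set S := {u : ℝ | u ∈ Icc (0:ℝ) ε₁ ∧ 2 ≤ dist (T u Y) X} with hSdef
    have hSne : S.Nonempty := ⟨s₁, hs₁, le_of_lt (by
      simpa [Metric.mem_closedBall, not_le] using hbad)⟩
    have hScl : IsClosed S := by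
      have : S = Icc (0:ℝ) ε₁ ∩ {u : ℝ | 2 ≤ dist (T u Y) X} := rfl
      rw [this]
      exact isClosed_Icc.inter (isClosed_le continuous_const hdistc)
    have hSbdd : BddBelow S := ⟨0, fun u hu => hu.1.1⟩
    set s₀ := sInf S with hs₀def
    have hs₀S : s₀ ∈ S := hScl.csInf_mem hSne hSbdd
    have hs₀pos : 0 < s₀ := by
      rcases lt_or_eq_of_le hs₀S.1.1 with h | h
      · exact h
      · exfalso
        have : dist (T s₀ Y) X ≤ 1 := by
          rw [← h, hT0]
          simpa [Metric.mem_closedBall] using hY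
        linarith [hs₀S.2]
    have hlt : ∀ u, 0 ≤ u → u < s₀ → dist (T u Y) X < 2 := by
      intro u hu0 hus
      by_contra hcc
      push_neg at hcc
      have : u ∈ S := ⟨⟨hu0, le_trans hus.le hs₀S.1.2⟩, hcc⟩
      exact absurd (csInf_le hSbdd this) (not_le.2 hus)
    have hle : ∀ u ∈ Icc (0:ℝ) s₀, T u Y ∈ Metric.closedBall X 2 := by
      intro u hu
      rcases lt_or_eq_of_le hu.2 with h | h
      · exact Metric.mem_closedBall.2 (hlt u hu.1 h).le
      · rw [h]
        rw [Metric.mem_closedBall]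
        have htend : Filter.Tendsto (fun w => dist (T w Y) X) (nhdsWithin s₀ (Iio s₀))
            (nhds (dist (T s₀ Y) X)) := (hdistc.tendsto s₀).mono_left nhdsWithin_le_nhds
        refine le_of_tendsto htend ?_
        filter_upwards [Ioo_mem_nhdsLT_of_mem (⟨hs₀pos, le_refl s₀⟩ : s₀ ∈ Ioc 0 s₀)]
          with w hw
        exact (hlt w hw.1.le hw.2).le
    have hmvt : ‖T s₀ Y - T 0 Y‖ ≤ M * ‖s₀ - (0:ℝ)‖ :=
      Convex.norm_image_sub_le_of_norm_hasDerivWithin_le (s := Icc (0:ℝ) s₀)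
        (fun u _ => (hTflow u Y).hasDerivWithinAt)
        (fun u hu => hM _ (hle u hu)) (convex_Icc _ _)
        ⟨le_refl 0, hs₀pos.le⟩ ⟨hs₀pos.le, le_refl s₀⟩
    have hs₀ε : s₀ ≤ ε₁ := hs₀S.1.2
    have hfar : dist (T s₀ Y) X < 2 := by
      have h1' : dist (T s₀ Y) (T 0 Y) ≤ M * s₀ := by
        rw [dist_eq_norm]
        calc ‖T s₀ Y - T 0 Y‖ ≤ M * ‖s₀ - (0:ℝ)‖ := hmvt
          _ = M * s₀ := by rw [sub_zero, Real.norm_eq_abs, abs_of_nonneg hs₀pos.le]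
      have h2' : M * s₀ < 1 := by
        calc M * s₀ ≤ M * ε₁ := mul_le_mul_of_nonneg_left hs₀ε hM0
          _ < 1 := hε₁M
      calc dist (T s₀ Y) X ≤ dist (T s₀ Y) (T 0 Y) + dist (T 0 Y) X := dist_triangle _ _ _
        _ < 1 + 1 := by
            refine add_lt_add_of_lt_of_le (lt_of_le_of_lt h1' h2') ?_
            rw [hT0]
            simpa [Metric.mem_closedBall] using hY
        _ = 2 := by norm_num
    linarith [hs₀S.2]
  -- speed bound
  have speed : ∀ Y ∈ Metric.closedBall X 1, ∀ s ∈ Icc (0:ℝ) ε₁,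
      ‖T s Y - Y‖ ≤ M * s := by
    intro Y hY s hs
    have hmvt : ‖T s Y - T 0 Y‖ ≤ M * ‖s - (0:ℝ)‖ :=
      Convex.norm_image_sub_le_of_norm_hasDerivWithin_le (s := Icc (0:ℝ) s)
        (fun u _ => (hTflow u Y).hasDerivWithinAt)
        (fun u hu => hM _ (stay Y hY u ⟨hu.1, hu.2.trans hs.2⟩)) (convex_Icc _ _)
        ⟨le_refl 0, hs.1⟩ ⟨hs.1, le_refl s⟩
    rw [hT0] at hmvt
    calc ‖T s Y - Y‖ ≤ M * ‖s - (0:ℝ)‖ := hmvt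
      _ = M * s := by rw [sub_zero, Real.norm_eq_abs, abs_of_nonneg hs.1]
  have hXmem : X ∈ Metric.closedBall X 1 := Metric.mem_closedBall_self (by norm_num)
  -- Gronwall
  set eL : ℝ := Real.exp (L * ε₁) with heLdef
  have heL1 : (1:ℝ) ≤ eL := by
    rw [heLdef, ← Real.exp_zero]
    exact Real.exp_le_exp.2 (by positivity)
  have heL0 : (0:ℝ) ≤ eL := le_trans zero_le_one heL1
  have grw : ∀ Y ∈ Metric.closedBall X 1, ∀ s ∈ Icc (0:ℝ) ε₁,
      ‖T s Y - T s X‖ ≤ ‖Y - X‖ * eL := by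
    intro Y hY s hs
    have key := norm_le_gronwallBound_of_norm_deriv_right_le
      (f := fun u => T u Y - T u X) (f' := fun u => V (T u Y) - V (T u X))
      (δ := ‖Y - X‖) (K := L) (ε := 0) (a := 0) (b := s)
      (((hTc Y).sub (hTc X)).continuousOn)
      (fun u _ => ((hTflow u Y).sub (hTflow u X)).hasDerivWithinAt.mono (fun w hw => trivial))
      (by simp only [hT0]; exact le_refl _)
      (fun u hu => by
        have hu' : u ∈ Icc (0:ℝ) ε₁ := ⟨hu.1, hu.2.le.trans hs.2⟩
        rw [add_zero]
        exact lipV _ (stay X hXmem u hu') _ (stay Y hY u hu'))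
      s ⟨hs.1, le_refl s⟩
    rw [gronwallBound_ε0, sub_zero] at key
    calc ‖T s Y - T s X‖ ≤ ‖Y - X‖ * Real.exp (L * s) := key
      _ ≤ ‖Y - X‖ * eL := mul_le_mul_of_nonneg_left
          (Real.exp_le_exp.2 (mul_le_mul_of_nonneg_left hs.2 hL0)) (norm_nonneg _)
  -- the main quantitative estimate
  set C₁ : ℝ := L₂ * eL * M + L₂ * eL + ‖Φ‖ * L * eL with hC₁def
  have hC₁0 : 0 ≤ C₁ := by
    have a1 : 0 ≤ L₂ * eL * M := mul_nonneg (mul_nonneg hL₂0 heL0) hM0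
    have a2 : 0 ≤ L₂ * eL := mul_nonneg hL₂0 heL0
    have a3 : 0 ≤ ‖Φ‖ * L * eL := mul_nonneg (mul_nonneg (norm_nonneg _) hL0) heL0
    rw [hC₁def]; linarith
  have main : ∀ Y ∈ Metric.closedBall X 1, ∀ t ∈ Icc (0:ℝ) ε₁,
      ‖T t Y - T t X - (Y - X) - t • Φ (Y - X)‖
        ≤ (C₁ * (t + ‖Y - X‖) * ‖Y - X‖) * t := by
    intro Y hY t ht
    set h' : ℝ := ‖Y - X‖ with hh'def
    have hh'0 : 0 ≤ h' := norm_nonneg _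
    have hh'1 : h' ≤ 1 := by
      rw [hh'def, ← dist_eq_norm]
      simpa [Metric.mem_closedBall] using hY
    -- inner estimate
    have inner : ∀ u ∈ Icc (0:ℝ) t, ‖T u Y - T u X - (Y - X)‖ ≤ L * (h' * eL) * u := by
      intro u hu
      have hu' : u ∈ Icc (0:ℝ) ε₁ := ⟨hu.1, hu.2.trans ht.2⟩
      have hmvt : ‖(T u Y - T u X - (Y - X)) - (T 0 Y - T 0 X - (Y - X))‖
          ≤ L * (h' * eL) * ‖u - (0:ℝ)‖ :=
        Convex.norm_image_sub_le_of_norm_hasDerivWithin_le (s := Icc (0:ℝ) u)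
          (f := fun w => T w Y - T w X - (Y - X))
          (f' := fun w => V (T w Y) - V (T w X))
          (fun w _ => (((hTflow w Y).sub (hTflow w X)).sub_const (Y - X)).hasDerivWithinAt)
          (fun w hw => by
            have hw' : w ∈ Icc (0:ℝ) ε₁ := ⟨hw.1, hw.2.trans hu'.2⟩
            calc ‖V (T w Y) - V (T w X)‖
                ≤ L * ‖T w Y - T w X‖ := lipV _ (stay X hXmem w hw') _ (stay Y hY w hw')
              _ ≤ L * (h' * eL) := mul_le_mul_of_nonneg_left (grw Y hY w hw') hL0)
          (convex_Icc _ _) ⟨le_refl 0, hu.1⟩ ⟨hu.1, le_refl u⟩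
      simp only [hT0, sub_self] at hmvt
      calc ‖T u Y - T u X - (Y - X)‖ = ‖T u Y - T u X - (Y - X) - 0‖ := by rw [sub_zero]
        _ ≤ L * (h' * eL) * ‖u - (0:ℝ)‖ := hmvt
        _ = L * (h' * eL) * u := by rw [sub_zero, Real.norm_eq_abs, abs_of_nonneg hu.1]
    -- derivative bound
    set D : ℝ := L₂ * (M * t + h') * (h' * eL) + ‖Φ‖ * (L * (h' * eL) * t) with hDdef
    have hFd : ∀ u ∈ Icc (0:ℝ) t, ‖V (T u Y) - V (T u X) - Φ (Y - X)‖ ≤ D := by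
      intro u hu
      have hu' : u ∈ Icc (0:ℝ) ε₁ := ⟨hu.1, hu.2.trans ht.2⟩
      have heq : V (T u Y) - V (T u X) - Φ (Y - X) =
          (V (T u Y) - V (T u X) - Φ (T u Y - T u X))
            + Φ (T u Y - T u X - (Y - X)) := by
        simp only [map_sub]
        abel
      rw [heq]
      have hA : ‖V (T u Y) - V (T u X) - Φ (T u Y - T u X)‖
          ≤ L₂ * (M * u + h') * ‖T u Y - T u X‖ := by
        refine taylor (M * u + h') (add_nonneg (mul_nonneg hM0 hu.1) hh'0) ?_
          (T u X) ?_ (T u Y) ?_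
        · have : M * u ≤ M * ε₁ := mul_le_mul_of_nonneg_left hu'.2 hM0
          linarith [hε₁M]
        · rw [Metric.mem_closedBall, dist_eq_norm]
          have hs := speed X hXmem u hu'
          linarith
        · rw [Metric.mem_closedBall, dist_eq_norm]
          have hs := speed Y hY u hu'
          calc ‖T u Y - X‖ = ‖(T u Y - Y) + (Y - X)‖ := by rw [sub_add_sub_cancel]
            _ ≤ ‖T u Y - Y‖ + ‖Y - X‖ := norm_add_le _ _
            _ ≤ M * u + h' := by rw [← hh'def]; linarith
      have hA' : ‖V (T u Y) - V (T u X) - Φ (T u Y - T u X)‖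
          ≤ L₂ * (M * t + h') * (h' * eL) := by
        have b1 : ‖T u Y - T u X‖ ≤ h' * eL := grw Y hY u hu'
        have b2 : L₂ * (M * u + h') ≤ L₂ * (M * t + h') := by
          have : M * u ≤ M * t := mul_le_mul_of_nonneg_left hu.2 hM0
          apply mul_le_mul_of_nonneg_left _ hL₂0
          linarith
        calc ‖V (T u Y) - V (T u X) - Φ (T u Y - T u X)‖
            ≤ L₂ * (M * u + h') * ‖T u Y - T u X‖ := hA
          _ ≤ L₂ * (M * t + h') * (h' * eL) := by
              apply mul_le_mul b2 b1 (norm_nonneg _)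
              exact mul_nonneg hL₂0 (add_nonneg (mul_nonneg hM0 ht.1) hh'0)
      have hB : ‖Φ (T u Y - T u X - (Y - X))‖ ≤ ‖Φ‖ * (L * (h' * eL) * t) := by
        calc ‖Φ (T u Y - T u X - (Y - X))‖
            ≤ ‖Φ‖ * ‖T u Y - T u X - (Y - X)‖ := Φ.le_opNorm _
          _ ≤ ‖Φ‖ * (L * (h' * eL) * t) := by
              apply mul_le_mul_of_nonneg_left _ (norm_nonneg Φ)
              calc ‖T u Y - T u X - (Y - X)‖ ≤ L * (h' * eL) * u := inner u hu
                _ ≤ L * (h' * eL) * t := by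
                    apply mul_le_mul_of_nonneg_left hu.2
                    exact mul_nonneg hL0 (mul_nonneg hh'0 heL0)
      calc ‖V (T u Y) - V (T u X) - Φ (T u Y - T u X)
            + Φ (T u Y - T u X - (Y - X))‖
          ≤ ‖V (T u Y) - V (T u X) - Φ (T u Y - T u X)‖
            + ‖Φ (T u Y - T u X - (Y - X))‖ := norm_add_le _ _
        _ ≤ D := by rw [hDdef]; linarith
    -- mean value theorem for the main quantity
    have hmvt2 : ‖(T t Y - T t X - (Y - X) - t • Φ (Y - X))
        - (T 0 Y - T 0 X - (Y - X) - (0:ℝ) • Φ (Y - X))‖ ≤ D * ‖t - (0:ℝ)‖ := by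
      refine Convex.norm_image_sub_le_of_norm_hasDerivWithin_le (s := Icc (0:ℝ) t)
        (f := fun u => T u Y - T u X - (Y - X) - u • Φ (Y - X))
        (f' := fun u => V (T u Y) - V (T u X) - Φ (Y - X))
        (fun u _ => ?_) hFd (convex_Icc _ _) ⟨le_refl 0, ht.1⟩ ⟨ht.1, le_refl t⟩
      have hs := ((hTflow u Y).sub (hTflow u X)).sub_const (Y - X)
      have hl := (hasDerivAt_id u).smul_const (Φ (Y - X))
      rw [one_smul] at hl
      exact (hs.sub hl).hasDerivWithinAt
    simp only [hT0, sub_self, zero_smul, sub_zero] at hmvt2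
    have hDle : D ≤ C₁ * (t + h') * h' := by
      have expand : C₁ * (t + h') * h' - D
          = (L₂ * eL) * (t * h')
            + (L₂ * eL * M + ‖Φ‖ * L * eL) * (h' * h') := by
        rw [hDdef, hC₁def]; ring
      have k1 : 0 ≤ (L₂ * eL) * (t * h') :=
        mul_nonneg (mul_nonneg hL₂0 heL0) (mul_nonneg ht.1 hh'0)
      have k2 : 0 ≤ (L₂ * eL * M + ‖Φ‖ * L * eL) * (h' * h') :=
        mul_nonneg (add_nonneg (mul_nonneg (mul_nonneg hL₂0 heL0) hM0)
          (mul_nonneg (mul_nonneg (norm_nonneg _) hL0) heL0)) (mul_nonneg hh'0 hh'0)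
      linarith
    calc ‖T t Y - T t X - (Y - X) - t • Φ (Y - X)‖
        ≤ D * ‖t‖ := hmvt2
      _ = D * t := by rw [Real.norm_eq_abs, abs_of_nonneg ht.1]
      _ ≤ (C₁ * (t + h') * h') * t := mul_le_mul_of_nonneg_right hDle ht.1
  -- conclude via difference quotients
  refine ⟨ε₁, hε₁pos, C₁ * ‖v‖, mul_nonneg hC₁0 (norm_nonneg v), ?_⟩
  intro t ht
  set h₀ : ℝ := 1 / (‖v‖ + 1) with hh₀def
  have hh₀pos : 0 < h₀ := by positivity
  have hψ : HasDerivAt (fun h : ℝ => T t (X + h • v)) (DT t X *ᵥ v) 0 := by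
    have hline : HasDerivAt (fun h : ℝ => X + h • v) v 0 := by
      have := ((hasDerivAt_id (0:ℝ)).smul_const v).const_add X
      rwa [one_smul] at this
    have h0 : (fun h : ℝ => X + h • v) 0 = X := by simp
    have key := HasFDerivAt.comp_hasDerivAt 0 (h0 ▸ hDT t X) hline
    simpa [Function.comp_def] using key
  have hval : Φ v = DV X *ᵥ v := by simp [hΦdef]
  have hslope : Filter.Tendsto (slope (fun h : ℝ => T t (X + h • v)) 0)
      (nhdsWithin 0 (Ioi 0)) (nhds (DT t X *ᵥ v)) :=
    (hasDerivAt_iff_tendsto_slope.1 hψ).mono_left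
      (nhdsWithin_mono 0 (fun x hx => ne_of_gt hx))
  have hnormt : Filter.Tendsto
      (fun h => ‖slope (fun h : ℝ => T t (X + h • v)) 0 h - v - t • (DV X *ᵥ v)‖)
      (nhdsWithin 0 (Ioi 0)) (nhds ‖DT t X *ᵥ v - v - t • (DV X *ᵥ v)‖) :=
    (((hslope.sub_const v).sub_const (t • (DV X *ᵥ v))).norm)
  have hev : ∀ᶠ h in nhdsWithin (0:ℝ) (Ioi 0),
      ‖slope (fun h : ℝ => T t (X + h • v)) 0 h - v - t • (DV X *ᵥ v)‖
        ≤ C₁ * (t + h * ‖v‖) * ‖v‖ * t := by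
    filter_upwards [Ioc_mem_nhdsGT_of_mem (⟨le_refl 0, hh₀pos⟩ : (0:ℝ) ∈ Ico 0 h₀)]
      with h hh
    have hhpos : 0 < h := hh.1
    set Y := X + h • v with hYdef
    have hYX : Y - X = h • v := by rw [hYdef]; abel
    have hh' : ‖Y - X‖ = h * ‖v‖ := by
      rw [hYX, norm_smul, Real.norm_eq_abs, abs_of_pos hhpos]
    have hYmem : Y ∈ Metric.closedBall X 1 := by
      rw [Metric.mem_closedBall, dist_eq_norm, hh']
      calc h * ‖v‖ ≤ h₀ * ‖v‖ := mul_le_mul_of_nonneg_right hh.2 (norm_nonneg v)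
        _ ≤ 1 := by
            rw [hh₀def, div_mul_eq_mul_div, one_mul, div_le_one (by positivity)]
            linarith [norm_nonneg v]
    have hmain := main Y hYmem t ht
    rw [hh'] at hmain
    have heq : slope (fun h : ℝ => T t (X + h • v)) 0 h - v - t • (DV X *ᵥ v)
        = h⁻¹ • (T t Y - T t X - (Y - X) - t • Φ (Y - X)) := by
      rw [slope_def_module]
      simp only [sub_zero, zero_smul, add_zero]
      rw [hYX, _root_.map_smul, hval, ← hYdef]
      match_scalars <;> field_simp
    rw [heq, norm_smul, Real.norm_eq_abs, abs_of_pos (inv_pos.2 hhpos)]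
    calc h⁻¹ * ‖T t Y - T t X - (Y - X) - t • Φ (Y - X)‖
        ≤ h⁻¹ * ((C₁ * (t + h * ‖v‖) * (h * ‖v‖)) * t) :=
          mul_le_mul_of_nonneg_left hmain (inv_pos.2 hhpos).le
      _ = C₁ * (t + h * ‖v‖) * ‖v‖ * t := by field_simp
  have hlim2 : Filter.Tendsto (fun h : ℝ => C₁ * (t + h * ‖v‖) * ‖v‖ * t)
      (nhdsWithin 0 (Ioi 0)) (nhds (C₁ * (t + 0 * ‖v‖) * ‖v‖ * t)) := by
    apply Filter.Tendsto.mono_left _ nhdsWithin_le_nhds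
    have c1 : Continuous fun h : ℝ => C₁ * (t + h * ‖v‖) :=
      continuous_const.mul (continuous_const.add (continuous_id.mul continuous_const))
    exact ((c1.mul continuous_const).mul continuous_const).tendsto 0
  have hfin := le_of_tendsto_of_tendsto hnormt hlim2 hev
  calc ‖DT t X *ᵥ v - v - t • (DV X *ᵥ v)‖
      ≤ C₁ * (t + 0 * ‖v‖) * ‖v‖ * t := hfin
    _ = C₁ * ‖v‖ * t ^ 2 := by ring

open Set Filter in

lemma key_two_sided
    (V : (Fin 3 → ℝ) → (Fin 3 → ℝ)) (hV : ContDiff ℝ (⊤ : ℕ∞) V)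
    (T : ℝ → (Fin 3 → ℝ) → (Fin 3 → ℝ))
    (hT0 : ∀ X, T 0 X = X)
    (hTflow : ∀ t X, HasDerivAt (fun s => T s X) (V (T t X)) t)
    (DT : ℝ → (Fin 3 → ℝ) → Matrix (Fin 3) (Fin 3) ℝ)
    (hDT : ∀ t X, HasFDerivAt (T t)
      (LinearMap.toContinuousLinearMap (Matrix.mulVecLin (DT t X))) X)
    (DV : (Fin 3 → ℝ) → Matrix (Fin 3) (Fin 3) ℝ)
    (hDV : ∀ X, HasFDerivAt V
      (LinearMap.toContinuousLinearMap (Matrix.mulVecLin (DV X))) X)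
    (X : Fin 3 → ℝ) (v : Fin 3 → ℝ) :
    ∃ ε > 0, ∃ C, 0 ≤ C ∧ ∀ t : ℝ, |t| ≤ ε →
      ‖DT t X *ᵥ v - v - t • (DV X *ᵥ v)‖ ≤ C * t ^ 2 := by
  obtain ⟨ε₁, hε₁, C₁, hC₁, hb₁⟩ := key_forward V hV T hT0 hTflow DT hDT DV hDV X v
  -- reversed data
  have hV' : ContDiff ℝ (⊤ : ℕ∞) (fun z => -(V z)) := hV.neg
  have hT0' : ∀ Y, (fun s Y => T (-s) Y) 0 Y = Y := by simpa using hT0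
  have hTflow' : ∀ t Y, HasDerivAt (fun s => T (-s) Y) ((fun z => -(V z)) (T (-t) Y)) t := by
    intro t Y
    have hneg : HasDerivAt (fun s : ℝ => -s) (-1) t := (hasDerivAt_id t).neg
    have := (hTflow (-t) Y).scomp t hneg
    simpa [Function.comp_def] using this
  have hDT' : ∀ t Y, HasFDerivAt ((fun s Y => T (-s) Y) t)
      (LinearMap.toContinuousLinearMap (Matrix.mulVecLin (DT (-t) Y))) Y :=
    fun t Y => hDT (-t) Y
  have hcl : ∀ Y, LinearMap.toContinuousLinearMap (Matrix.mulVecLin (-(DV Y)))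
      = -(LinearMap.toContinuousLinearMap (Matrix.mulVecLin (DV Y))) := by
    intro Y
    ext z
    simp [Matrix.neg_mulVec]
  have hDV' : ∀ Y, HasFDerivAt (fun z => -(V z))
      (LinearMap.toContinuousLinearMap (Matrix.mulVecLin (-(DV Y)))) Y := by
    intro Y
    rw [hcl]
    exact (hDV Y).neg
  obtain ⟨ε₂, hε₂, C₂, hC₂, hb₂⟩ := key_forward (fun z => -(V z)) hV'
    (fun s Y => T (-s) Y) hT0' hTflow' (fun s Y => DT (-s) Y) hDT'
    (fun Y => -(DV Y)) hDV' X v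
  refine ⟨min ε₁ ε₂, lt_min hε₁ hε₂, max C₁ C₂, le_trans hC₁ (le_max_left _ _), ?_⟩
  intro t ht
  rcases le_or_gt 0 t with h | h
  · have : t ∈ Set.Icc (0:ℝ) ε₁ := ⟨h, by
      have := abs_of_nonneg h ▸ ht
      exact this.trans (min_le_left _ _)⟩
    calc ‖DT t X *ᵥ v - v - t • (DV X *ᵥ v)‖ ≤ C₁ * t ^ 2 := hb₁ t this
      _ ≤ max C₁ C₂ * t ^ 2 := mul_le_mul_of_nonneg_right (le_max_left _ _) (sq_nonneg t)
  · have hmem : -t ∈ Set.Icc (0:ℝ) ε₂ := ⟨by linarith, by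
      have : |t| ≤ ε₂ := ht.trans (min_le_right _ _)
      rw [abs_of_neg h] at this
      exact this⟩
    have h2 := hb₂ (-t) hmem
    simp only [neg_neg] at h2
    have hsm : (-t) • ((-(DV X)) *ᵥ v) = t • (DV X *ᵥ v) := by
      rw [Matrix.neg_mulVec, smul_neg, neg_smul, neg_neg]
    rw [hsm] at h2
    calc ‖DT t X *ᵥ v - v - t • (DV X *ᵥ v)‖ ≤ C₂ * (-t) ^ 2 := h2
      _ = C₂ * t ^ 2 := by ring
      _ ≤ max C₁ C₂ * t ^ 2 := mul_le_mul_of_nonneg_right (le_max_right _ _) (sq_nonneg t)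


open Set Filter in

lemma entry_deriv
    (V : (Fin 3 → ℝ) → (Fin 3 → ℝ)) (hV : ContDiff ℝ (⊤ : ℕ∞) V)
    (T : ℝ → (Fin 3 → ℝ) → (Fin 3 → ℝ))
    (hT0 : ∀ X, T 0 X = X)
    (hTflow : ∀ t X, HasDerivAt (fun s => T s X) (V (T t X)) t)
    (DT : ℝ → (Fin 3 → ℝ) → Matrix (Fin 3) (Fin 3) ℝ)
    (hDT : ∀ t X, HasFDerivAt (T t)
      (LinearMap.toContinuousLinearMap (Matrix.mulVecLin (DT t X))) X)
    (DV : (Fin 3 → ℝ) → Matrix (Fin 3) (Fin 3) ℝ)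
    (hDV : ∀ X, HasFDerivAt V
      (LinearMap.toContinuousLinearMap (Matrix.mulVecLin (DV X))) X)
    (X : Fin 3 → ℝ) :
    DT 0 X = 1 ∧ ∀ i j, HasDerivAt (fun t => DT t X i j) (DV X i j) 0 := by
  have hDT0 : DT 0 X = 1 := by
    have hid : HasFDerivAt (T 0) (ContinuousLinearMap.id ℝ (Fin 3 → ℝ)) X := by
      have : T 0 = id := funext hT0
      rw [this]; exact hasFDerivAt_id X
    have huniq := (hDT 0 X).unique hid
    ext i j
    have := congrFun (congrArg
      (fun (L : (Fin 3 → ℝ) →L[ℝ] (Fin 3 → ℝ)) => L (Pi.single j 1)) huniq) i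
    simpa [Matrix.mulVec_single, Matrix.one_apply, Pi.single_apply, eq_comm] using this
  refine ⟨hDT0, fun i j => ?_⟩
  obtain ⟨ε, hε, C, hC, hb⟩ := key_two_sided V hV T hT0 hTflow DT hDT DV hDV X (Pi.single j 1)
  have hentry : ∀ t, (DT t X *ᵥ Pi.single j 1) i = DT t X i j := by
    intro t; rw [Matrix.mulVec_single]; exact mul_one _
  have hentry' : (DV X *ᵥ Pi.single j 1) i = DV X i j := by
    rw [Matrix.mulVec_single]; exact mul_one _
  apply hasDerivAt_of_quadratic_bound (C := C)
  have hev : ∀ᶠ t : ℝ in nhds 0, |t| ≤ ε := by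
    filter_upwards [Metric.closedBall_mem_nhds (0:ℝ) hε] with t htt
    simpa [Real.dist_eq] using htt
  filter_upwards [hev] with t htt
  have hvec := hb t htt
  set w : Fin 3 → ℝ := Pi.single j 1 with hwdef
  have hcomp : |(DT t X *ᵥ w - w - t • (DV X *ᵥ w)) i|
      ≤ ‖DT t X *ᵥ w - w - t • (DV X *ᵥ w)‖ := by
    have := norm_le_pi_norm (DT t X *ᵥ w - w - t • (DV X *ᵥ w)) i
    simpa using this
  have heq : (DT t X *ᵥ w - w - t • (DV X *ᵥ w)) i
      = DT t X i j - DT 0 X i j - t * DV X i j := by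
    simp only [Pi.sub_apply, Pi.smul_apply, smul_eq_mul, hentry t, hentry']
    rw [hDT0]
    have hw1 : w i = (1 : Matrix (Fin 3) (Fin 3) ℝ) i j := by
      rw [hwdef, Matrix.one_apply, Pi.single_apply]
    rw [hw1]
  rw [heq] at hcomp
  exact hcomp.trans (hvec.trans_eq rfl)


set_option maxHeartbeats 1000000 in
lemma endgame (a : ℝ → Matrix (Fin 3) (Fin 3) ℝ) (d : Matrix (Fin 3) (Fin 3) ℝ)
    (ha0 : a 0 = 1) (hd : ∀ i j, HasDerivAt (fun t => a t i j) (d i j) 0)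
    (n : Fin 3 → ℝ) (hn : n ⬝ᵥ n = 1) :
    HasDerivAt (fun t => (a t).det * enorm3 (((a t)⁻¹)ᵀ *ᵥ n))
      (d.trace - n ⬝ᵥ (d *ᵥ n)) 0 := by
  have hdet : HasDerivAt (fun t => (a t).det) d.trace 0 := by
    have e : (fun t => (a t).det) = fun t =>
        a t 0 0 * a t 1 1 * a t 2 2 - a t 0 0 * a t 1 2 * a t 2 1 -
        a t 0 1 * a t 1 0 * a t 2 2 + a t 0 1 * a t 1 2 * a t 2 0 +
        a t 0 2 * a t 1 0 * a t 2 1 - a t 0 2 * a t 1 1 * a t 2 0 := by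
      funext t; rw [Matrix.det_fin_three]
    rw [e]
    have H := (((((((hd 0 0).fun_mul (hd 1 1)).fun_mul (hd 2 2)).fun_sub
      (((hd 0 0).fun_mul (hd 1 2)).fun_mul (hd 2 1))).fun_sub
      (((hd 0 1).fun_mul (hd 1 0)).fun_mul (hd 2 2))).fun_add
      (((hd 0 1).fun_mul (hd 1 2)).fun_mul (hd 2 0))).fun_add
      (((hd 0 2).fun_mul (hd 1 0)).fun_mul (hd 2 1))).fun_sub
      (((hd 0 2).fun_mul (hd 1 1)).fun_mul (hd 2 0))
    refine H.congr_deriv ?_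
    simp [ha0, Matrix.one_apply, Matrix.trace_fin_three]
  have hdet0 : (a 0).det = 1 := by simp [ha0]
  have hdetinv : HasDerivAt (fun t => ((a t).det)⁻¹) (-d.trace) 0 := by
    have := hdet.fun_inv (by simp [hdet0])
    simpa [hdet0] using this
  have hadj : ∀ k i : Fin 3, HasDerivAt (fun t => (a t).adjugate k i)
      (d.trace * (1 : Matrix (Fin 3) (Fin 3) ℝ) k i - d k i) 0 := by
    intro k i
    fin_cases k <;> fin_cases i <;>
      simp only [Matrix.adjugate_fin_three, Matrix.trace_fin_three, Matrix.one_apply, Fin.zero_eta,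
        Fin.mk_one, Fin.isValue, Matrix.cons_val', Matrix.cons_val_zero, Matrix.cons_val_one,
        Matrix.head_cons, Matrix.empty_val', Matrix.cons_val_fin_one, Matrix.head_fin_const,
        Matrix.of_apply, Matrix.cons_val_two, Matrix.tail_cons, Matrix.tail_val',
        Matrix.head_val'] <;>
      norm_num <;>
      first
        | (refine (((hd _ _).fun_mul (hd _ _)).fun_sub ((hd _ _).fun_mul (hd _ _))).congr_deriv ?_ <;>
            simp [ha0, Matrix.one_apply] <;> try ring)
        | (refine ((((hd _ _).fun_mul (hd _ _)).fun_neg).fun_add ((hd _ _).fun_mul (hd _ _))).congr_deriv ?_ <;>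
            simp [ha0, Matrix.one_apply] <;> try ring)
  -- derivative of the entries of the inverse-transpose applied to n
  have hwd : ∀ i : Fin 3, HasDerivAt (fun t => ((((a t)⁻¹)ᵀ) *ᵥ n) i)
      (-(d 0 i * n 0 + d 1 i * n 1 + d 2 i * n 2)) 0 := by
    intro i
    have e : (fun t => ((((a t)⁻¹)ᵀ) *ᵥ n) i) = fun t =>
        ((a t).det)⁻¹ * ((a t).adjugate 0 i * n 0 + (a t).adjugate 1 i * n 1
          + (a t).adjugate 2 i * n 2) := by
      funext t
      rw [Matrix.inv_def, Ring.inverse_eq_inv']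
      simp [Matrix.mulVec, dotProduct, Fin.sum_univ_three, Matrix.transpose_apply]
      ring
    rw [e]
    have H := hdetinv.fun_mul ((((hadj 0 i).mul_const (n 0)).fun_add
      ((hadj 1 i).mul_const (n 1))).fun_add ((hadj 2 i).mul_const (n 2)))
    refine H.congr_deriv ?_
    simp only [ha0, Matrix.adjugate_one, Matrix.det_one, inv_one, one_mul]
    ring
  -- value of w at 0
  have hw0 : ∀ i : Fin 3, ((((a 0)⁻¹)ᵀ) *ᵥ n) i = n i := by
    intro i; simp [ha0]
  -- derivative of the squared norm
  have hQ := (((hwd 0).fun_mul (hwd 0)).fun_add ((hwd 1).fun_mul (hwd 1))).fun_add ((hwd 2).fun_mul (hwd 2))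
  have hQ0 : ((((a 0)⁻¹)ᵀ) *ᵥ n) 0 * ((((a 0)⁻¹)ᵀ) *ᵥ n) 0
      + ((((a 0)⁻¹)ᵀ) *ᵥ n) 1 * ((((a 0)⁻¹)ᵀ) *ᵥ n) 1
      + ((((a 0)⁻¹)ᵀ) *ᵥ n) 2 * ((((a 0)⁻¹)ᵀ) *ᵥ n) 2 = 1 := by
    simp only [hw0]
    simpa [dotProduct, Fin.sum_univ_three] using hn
  have hsq := (Real.hasDerivAt_sqrt (by rw [hQ0]; norm_num)).comp 0 hQ
  have final := hdet.fun_mul hsq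
  have efun : (fun t => (a t).det * enorm3 (((a t)⁻¹)ᵀ *ᵥ n)) = fun t =>
      (a t).det * Real.sqrt (((((a t)⁻¹)ᵀ) *ᵥ n) 0 * ((((a t)⁻¹)ᵀ) *ᵥ n) 0
        + ((((a t)⁻¹)ᵀ) *ᵥ n) 1 * ((((a t)⁻¹)ᵀ) *ᵥ n) 1
        + ((((a t)⁻¹)ᵀ) *ᵥ n) 2 * ((((a t)⁻¹)ᵀ) *ᵥ n) 2) := by
    funext t
    simp [enorm3, dotProduct, Fin.sum_univ_three]
  rw [efun]
  refine final.congr_deriv ?_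
  simp only [Function.comp_apply]
  rw [hQ0]
  simp only [hw0, hdet0, Real.sqrt_one]
  simp [dotProduct, Matrix.mulVec, Fin.sum_univ_three, Matrix.trace_fin_three]
  ring

/-- time derivative at `t = 0` of the surface Jacobian
`J_s(X,t) = det(DT_t(X)) · ‖(DT_t(X))^{-T} n‖` of the flow `T_t` of a smooth
vector field `V` equals the surface divergence of `V` at `X` relative to the
unit vector `n`: `(d/dt)J_s(X,t)|_{t=0} = ∇·V(X) − ⟨n, DV(X) n⟩`. -/

theorem stmt0
    (V : (Fin 3 → ℝ) → (Fin 3 → ℝ)) (hV : ContDiff ℝ (⊤ : ℕ∞) V)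
    (T : ℝ → (Fin 3 → ℝ) → (Fin 3 → ℝ))
    (hT0 : ∀ X, T 0 X = X)
    (hTflow : ∀ t X, HasDerivAt (fun s => T s X) (V (T t X)) t)
    (DT : ℝ → (Fin 3 → ℝ) → Matrix (Fin 3) (Fin 3) ℝ)
    (hDT : ∀ t X, HasFDerivAt (T t)
      (LinearMap.toContinuousLinearMap (Matrix.mulVecLin (DT t X))) X)
    (DV : (Fin 3 → ℝ) → Matrix (Fin 3) (Fin 3) ℝ)
    (hDV : ∀ X, HasFDerivAt V
      (LinearMap.toContinuousLinearMap (Matrix.mulVecLin (DV X))) X)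
    (X : Fin 3 → ℝ) (n : Fin 3 → ℝ) (hn : enorm3 n = 1) :
    HasDerivAt (fun t => (DT t X).det * enorm3 (((DT t X)⁻¹)ᵀ *ᵥ n))
      ((DV X).trace - n ⬝ᵥ (DV X *ᵥ n)) 0 := by
  obtain ⟨h0, hd⟩ := entry_deriv V hV T hT0 hTflow DT hDT DV hDV X
  have hnn : n ⬝ᵥ n = 1 := by
    have h1 : Real.sqrt (n ⬝ᵥ n) = 1 := hn
    have h2 : (0:ℝ) ≤ n ⬝ᵥ n := by
      simp only [dotProduct, Fin.sum_univ_three]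
      nlinarith [sq_nonneg (n 0), sq_nonneg (n 1), sq_nonneg (n 2)]
    nlinarith [Real.sq_sqrt h2, h1]
  exact endgame (fun t => DT t X) (DV X) h0 hd n hnn
end

section
/- Let Ω ⊂ ℝ³ be a bounded open set partitioned (up to the smooth interfaces Γ_p, Γ_c, Γ_e) into open sets Ω_p, Ω_m, Ω_s; let ε equal the positive constants ε_p, ε_m, ε_s on Ω_p, Ω_m, Ω_s respectively; let f ∈ L²(Ω); let χ_s be the indicator function of Ω_s; let B(φ) = β^{-1} Σ_{j=1}^M c_j^∞ (e^{-β q_j φ} − 1) with β > 0, c_j^∞ ≥ 0, q_j ∈ ℝ; let γ : ℝ → ℝ be C¹ with γ and γ′ bounded on bounded sets; let Γ = Γ_c ∪ Γ_e with surface measure dS, and let C, β, q_l be constants with q_l ≠ 0. For φ, ψ ∈ H¹(Ω) ∩ L^∞(Ω) with ∫_Γ γ(φ) dS ≠ 0, define G[Γ; φ] = ∫_Ω ( −(ε/2)|∇φ|² + fφ − χ_s B(φ) ) dX + (C/β) ln( ∫_Γ γ(φ) dS / ∫_Γ dS ). Then t ↦ G[Γ; φ + tψ] is differentiable at t = 0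 and (d/dt) G[Γ; φ + tψ]|_{t=0} = ∫_Ω ( −ε ⟨∇φ, ∇ψ⟩ − χ_s B′(φ) ψ + f ψ ) dX + ∫_Γ q_l ρ[Γ] ψ dS, where ρ[Γ] = C γ′(φ) / ( β q_l ∫_Γ γ(φ) dS ). -/
/-!
Along the line `φ + tψ` the energy splits into three kinds of terms. The Dirichlet term is a
quadratic polynomial in `t` once `‖∇φ + t∇ψ‖²` is expanded, so its derivative at `0` is the
linear coefficient `∫ -ε⟪∇φ, ∇ψ⟫`. The source, ionic and surface terms all have the form
`∫ w · g(φ + tψ)` with `w` integrable and `g` of class `C¹`; since `φ` and `ψ` are bounded,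
`g'(φ + tψ) ψ` is bounded uniformly for `|t| ≤ 1`, and one may differentiate under the integral
sign. The logarithm is differentiated by the chain rule, its argument being nonzero at `t = 0`,
and the normalising factor `∫_Γ dS` cancels from the logarithmic derivative.
-/

open MeasureTheory
open scoped RealInnerProductSpace

noncomputable section

local notation "E3" => EuclideanSpace ℝ (Fin 3)

open Filter

theorem gradient_add_const_mul {F : Type*} [NormedAddCommGroup F] [InnerProductSpace ℝ F]
    [CompleteSpace F] {φ ψ : F → ℝ} {x : F} (hφ : DifferentiableAt ℝ φ x)
    (hψ : DifferentiableAt ℝ ψ x) (t : ℝ) :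
    gradient (fun y => φ y + t * ψ y) x = gradient φ x + t • gradient ψ x := by
  refine HasGradientAt.gradient ?_
  rw [hasGradientAt_iff_hasFDerivAt, map_add, map_smul]
  simpa [gradient] using hφ.hasFDerivAt.fun_add (hψ.hasFDerivAt.const_mul t)

theorem Continuous.exists_abs_le_of_abs_le {g : ℝ → ℝ} (hg : Continuous g) (R : ℝ) :
    ∃ C, ∀ s, |s| ≤ R → |g s| ≤ C := by
  obtain ⟨C, hC⟩ := (isCompact_Icc (a := -R) (b := R)).exists_bound_of_continuousOn
    hg.continuousOn
  exact ⟨C, fun s hs => hC s (abs_le.mp hs)⟩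

theorem abs_add_mul_le_of_abs_le {a b t Ka Kb : ℝ} (ha : |a| ≤ Ka) (hb : |b| ≤ Kb)
    (ht : |t| ≤ 1) : |a + t * b| ≤ Ka + Kb := by
  have hKb : 0 ≤ Kb := (abs_nonneg b).trans hb
  calc |a + t * b| ≤ |a| + |t| * |b| := (abs_add_le _ _).trans_eq (by rw [abs_mul])
    _ ≤ Ka + 1 * Kb := by gcongr
    _ = Ka + Kb := by ring

theorem ae_restrict_abs_le_max_of_eqOn {X : Type*} [MeasurableSpace X] {μ : Measure X}
    {ε : X → ℝ} {Ω Ω₁ Ω₂ Ω₃ N : Set X} {a b c : ℝ} (hΩ : MeasurableSet Ω)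
    (hcover : Ω ⊆ Ω₁ ∪ Ω₂ ∪ Ω₃ ∪ N) (hN : μ N = 0) (h₁ : ∀ x ∈ Ω₁, ε x = a)
    (h₂ : ∀ x ∈ Ω₂, ε x = b) (h₃ : ∀ x ∈ Ω₃, ε x = c) :
    ∀ᵐ x ∂μ.restrict Ω, |ε x| ≤ max |a| (max |b| |c|) := by
  filter_upwards [ae_restrict_mem hΩ, ae_restrict_of_ae (measure_eq_zero_iff_ae_notMem.mp hN)]
    with x hxΩ hxN
  rcases hcover hxΩ with ((hx | hx) | hx) | hx
  · simp [h₁ x hx]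
  · simp [h₂ x hx]
  · simp [h₃ x hx]
  · exact absurd hx hxN

section FirstVariation

variable {X F : Type*} [MeasurableSpace X] {μ : Measure X} [NormedAddCommGroup F]
  {ε f w u v : X → ℝ} {a b : X → F} {K Ku Kv : ℝ}

theorem integrable_neg_div_two_mul_norm_sq (hε : AEStronglyMeasurable ε μ)
    (hεb : ∀ᵐ x ∂μ, |ε x| ≤ K) (ha : MemLp a 2 μ) :
    Integrable (fun x => -(ε x) / 2 * ‖a x‖ ^ 2) μ :=
  ((memLp_two_iff_integrable_sq_norm ha.1).mp ha).bdd_mul (c := K / 2) (by fun_prop)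
    (hεb.mono fun x hx => by rw [Real.norm_eq_abs, abs_div, abs_neg, abs_two]; linarith)

theorem integrable_mul_comp_add_mul {g : ℝ → ℝ} (hg : Continuous g) (hw : Integrable w μ)
    (hu : AEStronglyMeasurable u μ) (hv : AEStronglyMeasurable v μ)
    (hub : ∀ᵐ x ∂μ, |u x| ≤ Ku) (hvb : ∀ᵐ x ∂μ, |v x| ≤ Kv) (t : ℝ) :
    Integrable (fun x => w x * g (u x + t * v x)) μ := by
  obtain ⟨C, hC⟩ := hg.exists_abs_le_of_abs_le (Ku + |t| * Kv)
  refine hw.mul_bdd (c := C) (hg.comp_aestronglyMeasurable (hu.add (hv.const_mul t))) ?_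
  filter_upwards [hub, hvb] with x hux hvx
  refine hC _ ((abs_add_le _ _).trans ?_)
  rw [abs_mul]
  gcongr

theorem hasDerivAt_integral_mul_comp_add_mul {g : ℝ → ℝ} (hg : ContDiff ℝ 1 g)
    (hw : Integrable w μ) (hu : AEStronglyMeasurable u μ) (hv : AEStronglyMeasurable v μ)
    (hub : ∀ᵐ x ∂μ, |u x| ≤ Ku) (hvb : ∀ᵐ x ∂μ, |v x| ≤ Kv) :
    Integrable (fun x => w x * deriv g (u x) * v x) μ ∧
      HasDerivAt (fun t => ∫ x, w x * g (u x + t * v x) ∂μ)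
        (∫ x, w x * deriv g (u x) * v x ∂μ) 0 := by
  have hg' : Continuous (deriv g) := hg.continuous_deriv le_rfl
  -- for `|t| ≤ 1` the argument `u + t v` stays in `[-(Ku + Kv), Ku + Kv]`, where `|g'| ≤ C`
  obtain ⟨C, hC⟩ := hg'.exists_abs_le_of_abs_le (Ku + Kv)
  have key := hasDerivAt_integral_of_dominated_loc_of_deriv_le
    (F := fun t x => w x * g (u x + t * v x))
    (F' := fun t x => w x * deriv g (u x + t * v x) * v x)
    (bound := fun x => |w x| * (C * Kv)) (Metric.ball_mem_nhds 0 one_pos)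
    (Eventually.of_forall fun t =>
      (integrable_mul_comp_add_mul hg.continuous hw hu hv hub hvb t).aestronglyMeasurable)
    (integrable_mul_comp_add_mul hg.continuous hw hu hv hub hvb 0)
    ((hw.aestronglyMeasurable.mul
      (hg'.comp_aestronglyMeasurable (hu.add (hv.const_mul 0)))).mul hv)
    ?_ (hw.abs.mul_const _) ?_
  · simpa only [zero_mul, add_zero] using key
  · filter_upwards [hub, hvb] with x hux hvx t ht
    have ht : |t| ≤ 1 := by simpa using (Metric.mem_ball.mp ht).le
    have hg'x := hC _ (abs_add_mul_le_of_abs_le hux hvx ht)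
    rw [Real.norm_eq_abs, abs_mul, abs_mul, mul_assoc]
    exact mul_le_mul_of_nonneg_left
      (mul_le_mul hg'x hvx (abs_nonneg _) ((abs_nonneg _).trans hg'x)) (abs_nonneg _)
  · refine Eventually.of_forall fun x t _ => ?_
    have hlin : HasDerivAt (fun s : ℝ => u x + s * v x) (v x) t := by
      simpa using ((hasDerivAt_id t).mul_const (v x)).const_add (u x)
    simpa only [mul_assoc, Function.comp_apply] using
      (((hg.differentiable one_ne_zero _).hasDerivAt.comp t hlin).const_mul (w x))

variable [InnerProductSpace ℝ F]

theorem MeasureTheory.MemLp.integrable_inner (ha : MemLp a 2 μ) (hb : MemLp b 2 μ) :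
    Integrable (fun x => ⟪a x, b x⟫) μ := by
  refine (L2.integrable_inner (ha.toLp a) (hb.toLp b)).congr ?_
  filter_upwards [ha.coeFn_toLp, hb.coeFn_toLp] with x hax hbx
  rw [hax, hbx]

theorem hasDerivAt_integral_mul_norm_add_smul_sq (hε : AEStronglyMeasurable ε μ)
    (hεb : ∀ᵐ x ∂μ, |ε x| ≤ K) (ha : MemLp a 2 μ) (hb : MemLp b 2 μ) :
    Integrable (fun x => -(ε x) * ⟪a x, b x⟫) μ ∧
      HasDerivAt (fun t : ℝ => ∫ x, -(ε x) / 2 * ‖a x + t • b x‖ ^ 2 ∂μ)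
        (∫ x, -(ε x) * ⟪a x, b x⟫ ∂μ) 0 := by
  have hQ : Integrable (fun x => -(ε x) * ⟪a x, b x⟫) μ :=
    (ha.integrable_inner hb).bdd_mul (by fun_prop)
      (hεb.mono fun x hx => by rwa [Real.norm_eq_abs, abs_neg])
  refine ⟨hQ, ?_⟩
  set P := ∫ x, -(ε x) / 2 * ‖a x‖ ^ 2 ∂μ
  set Q := ∫ x, -(ε x) * ⟪a x, b x⟫ ∂μ
  set R := ∫ x, -(ε x) / 2 * ‖b x‖ ^ 2 ∂μ
  have hquad : (fun t : ℝ => ∫ x, -(ε x) / 2 * ‖a x + t • b x‖ ^ 2 ∂μ)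
      = fun t => P + t * Q + t ^ 2 * R := by
    funext t
    have hpt : ∀ x, -(ε x) / 2 * ‖a x + t • b x‖ ^ 2 = -(ε x) / 2 * ‖a x‖ ^ 2
        + t * (-(ε x) * ⟪a x, b x⟫) + t ^ 2 * (-(ε x) / 2 * ‖b x‖ ^ 2) := fun x => by
      rw [norm_add_sq_real, real_inner_smul_right, norm_smul, mul_pow, Real.norm_eq_abs, sq_abs]
      ring
    simp_rw [hpt]
    rw [integral_add, integral_add, integral_const_mul, integral_const_mul]
    · exact integrable_neg_div_two_mul_norm_sq hε hεb ha
    · exact hQ.const_mul t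
    · exact (integrable_neg_div_two_mul_norm_sq hε hεb ha).add (hQ.const_mul t)
    · exact (integrable_neg_div_two_mul_norm_sq hε hεb hb).const_mul _
  rw [hquad]
  simpa using (((hasDerivAt_id (0 : ℝ)).mul_const Q).const_add P).fun_add
    ((hasDerivAt_pow 2 (0 : ℝ)).mul_const R)

theorem hasDerivAt_integral_energy_density {g : ℝ → ℝ} (hg : ContDiff ℝ 1 g)
    (hε : AEStronglyMeasurable ε μ) (hεb : ∀ᵐ x ∂μ, |ε x| ≤ K) (ha : MemLp a 2 μ)
    (hb : MemLp b 2 μ) (hf : Integrable f μ) (hw : Integrable w μ)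
    (hu : AEStronglyMeasurable u μ) (hv : AEStronglyMeasurable v μ)
    (hub : ∀ᵐ x ∂μ, |u x| ≤ Ku) (hvb : ∀ᵐ x ∂μ, |v x| ≤ Kv) :
    HasDerivAt
      (fun t : ℝ => ∫ x, -(ε x) / 2 * ‖a x + t • b x‖ ^ 2 + f x * (u x + t * v x)
        - w x * g (u x + t * v x) ∂μ)
      (∫ x, -(ε x) * ⟪a x, b x⟫ - w x * deriv g (u x) * v x + f x * v x ∂μ) 0 := by
  obtain ⟨hD'i, hD⟩ := hasDerivAt_integral_mul_norm_add_smul_sq hε hεb ha hb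
  obtain ⟨hL'i, hL⟩ := hasDerivAt_integral_mul_comp_add_mul contDiff_id hf hu hv hub hvb
  obtain ⟨hN'i, hN⟩ := hasDerivAt_integral_mul_comp_add_mul hg hw hu hv hub hvb
  simp only [deriv_id, mul_one, id_eq] at hL hL'i
  refine ((((hD.fun_add hL).fun_sub hN).congr_deriv ?_)).congr_of_eventuallyEq
    (Eventually.of_forall fun t => ?_)
  · rw [← integral_add hD'i hL'i, ← integral_sub (hD'i.fun_add hL'i) hN'i]
    congr 1
    funext x
    ring
  · have hDi : Integrable (fun x => -(ε x) / 2 * ‖a x + t • b x‖ ^ 2) μ :=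
      integrable_neg_div_two_mul_norm_sq hε hεb (ha.add (hb.const_smul t))
    have hLi := integrable_mul_comp_add_mul continuous_id hf hu hv hub hvb t
    simp only [id_eq] at hLi
    dsimp only
    rw [integral_sub (hDi.fun_add hLi)
      (integrable_mul_comp_add_mul hg.continuous hw hu hv hub hvb t), integral_add hDi hLi]

end FirstVariation

theorem stmt9_general
    -- the domain and its partition by the subdomains and the interfaces
    (Ω Ωp Ωm Ωs Γp Γc Γe : Set E3)
    (hΩopen : IsOpen Ω) (hΩbd : Bornology.IsBounded Ω)
    (hs : IsOpen Ωs)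
    (hpart : Ω = Ωp ∪ Ωm ∪ Ωs ∪ (Γp ∪ Γc ∪ Γe))
    (hnull : volume (Γp ∪ Γc ∪ Γe) = 0)
    -- the piecewise constant dielectric coefficient
    (εp εm εs : ℝ)
    (ε : E3 → ℝ) (hεmeas : Measurable ε)
    (hε1 : ∀ x ∈ Ωp, ε x = εp) (hε2 : ∀ x ∈ Ωm, ε x = εm) (hε3 : ∀ x ∈ Ωs, ε x = εs)
    -- the fixed charge density, in L²(Ω)
    (f : E3 → ℝ) (hf : MemLp f 2 (volume.restrict Ω))
    -- the ionic energy density B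
    (β : ℝ) (M : ℕ) (c : Fin M → ℝ) (q : Fin M → ℝ)
    (B : ℝ → ℝ)
    (hB : ∀ s : ℝ, B s = β⁻¹ * ∑ j, c j * (Real.exp (-(β * q j * s)) - 1))
    -- the lipid distribution function γ, C¹ with γ, γ′ bounded on bounded sets
    (γ : ℝ → ℝ) (hγ : ContDiff ℝ 1 γ)
    -- the membrane surface Γ = Γc ∪ Γe, with finite surface measure
    (Γ : Set E3) (hΓfin : μH[2] Γ ≠ ⊤)
    -- the constants
    (C ql : ℝ) (hql : ql ≠ 0)
    -- φ, ψ ∈ H¹(Ω) ∩ L^∞(Ω)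
    (φ ψ : E3 → ℝ) (hφ : ContDiff ℝ 1 φ) (hψ : ContDiff ℝ 1 ψ)
    (hφbd : ∃ K, ∀ x, |φ x| ≤ K) (hψbd : ∃ K, ∀ x, |ψ x| ≤ K)
    (hφH1 : MemLp (fun x => gradient φ x) 2 (volume.restrict Ω))
    (hψH1 : MemLp (fun x => gradient ψ x) 2 (volume.restrict Ω))
    -- nonvanishing of ∫_Γ γ(φ) dS
    (hΓint : (∫ x in Γ, γ (φ x) ∂μH[2]) ≠ 0) :
    HasDerivAt
      (fun t : ℝ =>
        (∫ x in Ω, (-(ε x) / 2 * ‖gradient (fun y => φ y + t * ψ y) x‖ ^ 2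
            + f x * (φ x + t * ψ x)
            - Set.indicator Ωs (fun _ => (1:ℝ)) x * B (φ x + t * ψ x)))
          + C / β * Real.log ((∫ x in Γ, γ (φ x + t * ψ x) ∂μH[2])
              / (∫ x in Γ, (1:ℝ) ∂μH[2])))
      ((∫ x in Ω, (-(ε x) * ⟪gradient φ x, gradient ψ x⟫
          - Set.indicator Ωs (fun _ => (1:ℝ)) x * deriv B (φ x) * ψ x
          + f x * ψ x))
        + ∫ x in Γ, ql * (C * deriv γ (φ x)
            / (β * ql * ∫ y in Γ, γ (φ y) ∂μH[2])) * ψ x ∂μH[2])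
      0 := by
  obtain ⟨Kφ, hKφ⟩ := hφbd
  obtain ⟨Kψ, hKψ⟩ := hψbd
  have : IsFiniteMeasure (volume.restrict Ω) := ⟨by simpa using hΩbd.measure_lt_top⟩
  have : IsFiniteMeasure (μH[2].restrict Γ) := ⟨by simpa using hΓfin.lt_top⟩
  have hBC1 : ContDiff ℝ 1 B := by rw [funext hB]; fun_prop
  have hvol := hasDerivAt_integral_energy_density hBC1 hεmeas.aestronglyMeasurable
    (ae_restrict_abs_le_max_of_eqOn hΩopen.measurableSet hpart.subset hnull hε1 hε2 hε3)
    hφH1 hψH1 (hf.integrable one_le_two) ((integrable_const 1).indicator hs.measurableSet)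
    hφ.continuous.aestronglyMeasurable hψ.continuous.aestronglyMeasurable
    (ae_of_all _ hKφ) (ae_of_all _ hKψ)
  have hsurf := (hasDerivAt_integral_mul_comp_add_mul (μ := μH[2].restrict Γ) hγ
    (integrable_const 1) hφ.continuous.aestronglyMeasurable hψ.continuous.aestronglyMeasurable
    (ae_of_all _ hKφ) (ae_of_all _ hKψ)).2
  simp only [one_mul] at hsurf
  have hS : (∫ x in Γ, (1:ℝ) ∂μH[2]) ≠ 0 := by
    have hΓ0 : μH[2] Γ ≠ 0 := fun h0 =>
      hΓint (by rw [Measure.restrict_eq_zero.mpr h0, integral_zero_measure])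
    simpa [measureReal_def, ENNReal.toReal_eq_zero_iff, hΓ0] using hΓfin
  have hlog := ((hsurf.div_const _).log (div_ne_zero (by simpa using hΓint) hS)).const_mul (C / β)
  have hgrad (t : ℝ) (x : E3) :
      gradient (fun y => φ y + t * ψ y) x = gradient φ x + t • gradient ψ x :=
    gradient_add_const_mul (hφ.differentiable one_ne_zero x) (hψ.differentiable one_ne_zero x) t
  refine ((hvol.fun_add hlog).congr_deriv ?_).congr_of_eventuallyEq
    (Eventually.of_forall fun t => by simp only [hgrad])
  simp only [zero_mul, add_zero]
  rw [div_div_div_cancel_right₀ hS, ← integral_div, ← integral_const_mul]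
  congr 1
  refine integral_congr_ae (ae_of_all _ fun _ => ?_)
  field_simp

/-- first variation of the electrostatic potential energy
`G[Γ;φ] = ∫_Ω(−(ε/2)|∇φ|² + fφ − χ_s B(φ)) dX
          + (C/β) ln(∫_Γ γ(φ) dS / ∫_Γ dS)`
in the direction `ψ`:  `t ↦ G[Γ; φ + tψ]` is differentiable at `t = 0` with
derivative `∫_Ω(−ε⟨∇φ,∇ψ⟩ − χ_s B′(φ)ψ + fψ) dX + ∫_Γ q_l ρ[Γ] ψ dS`, where
`ρ[Γ] = C γ′(φ)/(β q_l ∫_Γ γ(φ) dS)`. -/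
theorem stmt9
    -- the domain and its partition by the subdomains and the interfaces
    (Ω Ωp Ωm Ωs Γp Γc Γe : Set E3)
    (hΩopen : IsOpen Ω) (hΩbd : Bornology.IsBounded Ω)
    (hp : IsOpen Ωp) (hm : IsOpen Ωm) (hs : IsOpen Ωs)
    (hpart : Ω = Ωp ∪ Ωm ∪ Ωs ∪ (Γp ∪ Γc ∪ Γe))
    (hd1 : Disjoint Ωp Ωm) (hd2 : Disjoint Ωp Ωs) (hd3 : Disjoint Ωm Ωs)
    (hnull : volume (Γp ∪ Γc ∪ Γe) = 0)
    -- the piecewise constant dielectric coefficient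
    (εp εm εs : ℝ) (hεp : 0 < εp) (hεm : 0 < εm) (hεs : 0 < εs)
    (ε : E3 → ℝ) (hεmeas : Measurable ε)
    (hε1 : ∀ x ∈ Ωp, ε x = εp) (hε2 : ∀ x ∈ Ωm, ε x = εm) (hε3 : ∀ x ∈ Ωs, ε x = εs)
    -- the fixed charge density, in L²(Ω)
    (f : E3 → ℝ) (hf : MemLp f 2 (volume.restrict Ω))
    -- the ionic energy density B
    (β : ℝ) (hβ : 0 < β) (M : ℕ) (c : Fin M → ℝ) (hc : ∀ j, 0 ≤ c j) (q : Fin M → ℝ)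
    (B : ℝ → ℝ)
    (hB : ∀ s : ℝ, B s = β⁻¹ * ∑ j, c j * (Real.exp (-(β * q j * s)) - 1))
    -- the lipid distribution function γ, C¹ with γ, γ′ bounded on bounded sets
    (γ : ℝ → ℝ) (hγ : ContDiff ℝ 1 γ)
    (hγbd : ∀ R : ℝ, ∃ K : ℝ, ∀ x : ℝ, |x| ≤ R → |γ x| ≤ K ∧ |deriv γ x| ≤ K)
    -- the membrane surface Γ = Γc ∪ Γe, with finite surface measure
    (Γ : Set E3) (hΓ : Γ = Γc ∪ Γe) (hΓfin : μH[2] Γ ≠ ⊤)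
    -- the constants
    (C ql : ℝ) (hql : ql ≠ 0)
    -- φ, ψ ∈ H¹(Ω) ∩ L^∞(Ω)
    (φ ψ : E3 → ℝ) (hφ : ContDiff ℝ 1 φ) (hψ : ContDiff ℝ 1 ψ)
    (hφbd : ∃ K, ∀ x, |φ x| ≤ K) (hψbd : ∃ K, ∀ x, |ψ x| ≤ K)
    (hφ2 : MemLp φ 2 (volume.restrict Ω)) (hψ2 : MemLp ψ 2 (volume.restrict Ω))
    (hφH1 : MemLp (fun x => gradient φ x) 2 (volume.restrict Ω))
    (hψH1 : MemLp (fun x => gradient ψ x) 2 (volume.restrict Ω))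
    -- nonvanishing of ∫_Γ γ(φ) dS
    (hΓint : (∫ x in Γ, γ (φ x) ∂μH[2]) ≠ 0) :
    HasDerivAt
      (fun t : ℝ =>
        (∫ x in Ω, (-(ε x) / 2 * ‖gradient (fun y => φ y + t * ψ y) x‖ ^ 2
            + f x * (φ x + t * ψ x)
            - Set.indicator Ωs (fun _ => (1:ℝ)) x * B (φ x + t * ψ x)))
          + C / β * Real.log ((∫ x in Γ, γ (φ x + t * ψ x) ∂μH[2])
              / (∫ x in Γ, (1:ℝ) ∂μH[2])))
      ((∫ x in Ω, (-(ε x) * ⟪gradient φ x, gradient ψ x⟫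
          - Set.indicator Ωs (fun _ => (1:ℝ)) x * deriv B (φ x) * ψ x
          + f x * ψ x))
        + ∫ x in Γ, ql * (C * deriv γ (φ x)
            / (β * ql * ∫ y in Γ, γ (φ y) ∂μH[2])) * ψ x ∂μH[2])
      0 :=
  stmt9_general Ω Ωp Ωm Ωs Γp Γc Γe hΩopen hΩbd hs hpart hnull εp εm εs ε hεmeas hε1 hε2 hε3 f hf β
    M c q B hB γ hγ Γ hΓfin C ql hql φ ψ hφ hψ hφbd hψbd hφH1 hψH1 hΓint

end
end

section
/- Let a, b ∈ ℝ³, let n ∈ ℝ³ be a unit vector, and let ε_s, ε_m, q_l, ρ, B ∈ ℝ satisfy the interface condition ε_s ⟨a, n⟩ = ε_m ⟨b, n⟩ − q_l ρ. Define the Maxwell stress tensors M^s = ε_s (a ⊗ a) − (ε_s/2)‖a‖² I − B I and M^m = ε_m (b ⊗ b) − (ε_m/2)‖b‖² I, where I is the 3×3 identity matrix and (x ⊗ y) is the matrix with entries x_i y_j. Then the jump of the normal stress satisfies ⟨n, M^s n⟩ − ⟨n, M^m n⟩ = −(ε_s/2)‖a‖² + (ε_m/2)‖b‖² − ε_m ⟨b,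 n⟩² + ε_m ⟨a, n⟩⟨b, n⟩ − B − q_l ρ ⟨a, n⟩; that is, the jump of the Maxwell stress tensor across the charged dielectric interface equals the dielectric boundary force density F_n obtained from the shape derivative of the electrostatic energy. -/
open Matrix

lemma dot_nonneg3 (v : Fin 3 → ℝ) : 0 ≤ v ⬝ᵥ v := by
  exact Finset.sum_nonneg fun i _ => mul_self_nonneg _

lemma dot_vmv (u v n : Fin 3 → ℝ) : n ⬝ᵥ (vecMulVec u v *ᵥ n) = (u ⬝ᵥ n) * (v ⬝ᵥ n) := by
  simp [vecMulVec_apply, mulVec, dotProduct, Fin.sum_univ_three]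
  ring

lemma enorm3_sq (v : Fin 3 → ℝ) : enorm3 v ^ 2 = v ⬝ᵥ v := by
  rw [enorm3, Real.sq_sqrt (dot_nonneg3 v)]

/-- the jump of the normal component of the Maxwell stress tensor
across the charged dielectric interface equals (minus) the dielectric boundary
force density obtained from the shape derivative.  Here `a = ∇ψˢ`, `b = ∇ψᵐ`,
`Mˢ = ε_s a⊗a − (ε_s/2)‖a‖² I − B I`, `Mᵐ = ε_m b⊗b − (ε_m/2)‖b‖² I`, and the
interface condition `ε_s ⟨a,n⟩ = ε_m ⟨b,n⟩ − q_l ρ` holds. -/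
theorem stmt14 (a b n : Fin 3 → ℝ) (hn : enorm3 n = 1)
    (εs εm ql ρ B : ℝ)
    (hjump : εs * (a ⬝ᵥ n) = εm * (b ⬝ᵥ n) - ql * ρ)
    (Ms Mm : Matrix (Fin 3) (Fin 3) ℝ)
    (hMs : Ms = εs • vecMulVec a a - (εs / 2 * enorm3 a ^ 2) • (1 : Matrix (Fin 3) (Fin 3) ℝ)
        - B • (1 : Matrix (Fin 3) (Fin 3) ℝ))
    (hMm : Mm = εm • vecMulVec b b - (εm / 2 * enorm3 b ^ 2) • (1 : Matrix (Fin 3) (Fin 3) ℝ)) :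
    n ⬝ᵥ (Ms *ᵥ n) - n ⬝ᵥ (Mm *ᵥ n)
      = -(εs / 2) * enorm3 a ^ 2 + εm / 2 * enorm3 b ^ 2 - εm * (b ⬝ᵥ n) ^ 2
        + εm * (a ⬝ᵥ n) * (b ⬝ᵥ n) - B - ql * ρ * (a ⬝ᵥ n) := by
  have hnn : n ⬝ᵥ n = 1 := by rw [← enorm3_sq, hn]; norm_num
  subst hMs hMm
  simp only [sub_mulVec, smul_mulVec, one_mulVec,
    dotProduct_sub, dotProduct_smul, smul_eq_mul, hnn, dot_vmv]
  have h1 : εs * (a ⬝ᵥ n) ^ 2 = (εm * (b ⬝ᵥ n) - ql * ρ) * (a ⬝ᵥ n) := by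
    rw [sq, ← mul_assoc, hjump]
  nlinarith [h1]
end
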